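/- arXiv:1812.01168 — 9 statements merged into one kernel-verified Lean document; each statement's English description precedes it below -/
import Mathlib

section
/- Let A be a commutative ring, and let u : ι → ι → A satisfy u a b = -u b a, (u a b)² = 0, and u a b * u b c + u b c * u c a + u c a * u a b = 0. With Δ a b c := u a b + u b c + u c a, the square move holds: Δ 1 2 3 * Δ 1 3 4 = Δ 2 3 4 * Δ 2 4 1, where 1,2,3,4 are any four indices. -/
/-!
Expanding `triangle u a b c * triangle u a c d`, every term containing the diagonal
`u a c` cancels: the Arnold relation on each of the two triangles turns "diagonal times the two
sides" into the product of those sides, and `u a c ^ 2 = 0`. What remains is the second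
elementary symmetric polynomial of the four boundary edges `u a b, u b c, u c d, u d a` of the
square, which is the same for both triangulations of the square.
-/

theorem Multiset.esymm_two_four {A : Type*} [CommRing A] (x y z w : A) :
    ({x, y, z, w} : Multiset A).esymm 2 = x * y + x * z + x * w + y * z + y * w + z * w := by
  simp only [esymm, insert_eq_cons, powersetCard_cons, Nat.reduceAdd, card_singleton,
    Order.lt_two_iff, Std.le_refl, powersetCard_eq_empty, powersetCard_one, map_singleton,
    zero_add, powersetCard_zero_left, cons_zero, singleton_add, map_cons,
    add_cons, cons_add, prod_cons, prod_singleton, sum_cons, sum_singleton]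
  ring

section ArnoldRelation

variable {A ι : Type*} [CommRing A] (u : ι → ι → A)

def triangle (a b c : ι) : A := u a b + u b c + u c a

variable {u}

theorem diagonal_mul_sides (hanti : ∀ a b, u a b = - u b a)
    (harnold : ∀ a b c, u a b * u b c + u b c * u c a + u c a * u a b = 0) (a b c : ι) :
    u a c * (u a b + u b c) = u a b * u b c := by
  linear_combination (hanti c a) * (u a b + u b c) - harnold a b c

theorem triangle_mul_triangle (hanti : ∀ a b, u a b = - u b a) (hsq : ∀ a b, (u a b) ^ 2 = 0)
    (harnold : ∀ a b c, u a b * u b c + u b c * u c a + u c a * u a b = 0) (a b c d : ι) :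
    triangle u a b c * triangle u a c d = ({u a b, u b c, u c d, u d a} : Multiset A).esymm 2 := by
  have habc := diagonal_mul_sides hanti harnold a b c
  have hcda := diagonal_mul_sides hanti harnold c d a
  rw [hanti c a] at hcda
  rw [triangle, triangle, hanti c a, Multiset.esymm_two_four]
  linear_combination habc + hcda - hsq a c

end ArnoldRelation

theorem square_move
    {A ι : Type*} [CommRing A] (u : ι → ι → A)
    (hanti : ∀ a b, u a b = - u b a)
    (hsq : ∀ a b, (u a b) ^ 2 = 0)
    (harnold : ∀ a b c, u a b * u b c + u b c * u c a + u c a * u a b = 0)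
    (i₁ i₂ i₃ i₄ : ι) :
    (u i₁ i₂ + u i₂ i₃ + u i₃ i₁) * (u i₁ i₃ + u i₃ i₄ + u i₄ i₁)
      = (u i₂ i₃ + u i₃ i₄ + u i₄ i₂) * (u i₂ i₄ + u i₄ i₁ + u i₁ i₂) := by
  change triangle u i₁ i₂ i₃ * triangle u i₁ i₃ i₄ = triangle u i₂ i₃ i₄ * triangle u i₂ i₄ i₁
  rw [triangle_mul_triangle hanti hsq harnold, triangle_mul_triangle hanti hsq harnold]
  congr 1
  exact Multiset.coe_eq_coe.mpr (List.rotate_perm _ 1).symm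
end

section
/- Let A be a commutative ℚ-algebra and let u satisfy antisymmetry, square-zero, and the Arnold relation; set Δ a b c := u a b + u b c + u c a. For n ≥ 3 and indices 1,…,n+1, the U(1) decoupling identity holds: (Δ(1,2,n+1) + Δ(2,3,n+1) + ⋯ + Δ(n-1,n,n+1) + Δ(n,1,n+1))^{n-1} = 0. -/
/-!
The edges through `b` cancel in pairs, since the cyclic sum of `u (a (i + 1)) b` is a reindexing
of that of `u (a i) b`, so the sum is the polygon `u a₀a₁ + ⋯ + u aₙ₋₁a₀`. Fanning out from `a₀`,
the polygon is the sum of the `n - 2` triangles `Δ a₀ aᵢ₊₁ aᵢ₊₂`, and by the Arnold relation each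
triangle squares to zero. In a commutative ring a sum of `m` square-zero elements has vanishing
`(m + 1)`-st power.
-/

open Finset

theorem sum_pow_card_add_one_eq_zero_of_sq_eq_zero {R ι : Type*} [CommSemiring R]
    (s : Finset ι) (f : ι → R) (hf : ∀ i ∈ s, f i ^ 2 = 0) :
    (∑ i ∈ s, f i) ^ (#s + 1) = 0 := by
  classical
  induction s using Finset.induction_on with
  | empty => simp
  | insert i s hi ih =>
    rw [sum_insert hi, card_insert_of_notMem hi]
    have hfi : f i ^ 2 = 0 := hf i (mem_insert_self i s)
    have hs : (∑ j ∈ s, f j) ^ (#s + 1) = 0 := ih fun j hj ↦ hf j (mem_insert_of_mem hj)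
    simpa [add_comm 2] using (Commute.all _ _).add_pow_add_eq_zero_of_pow_eq_zero hfi hs

theorem sum_range_mod_add_one {M : Type*} [AddCommMonoid M] (n : ℕ) (f : ℕ → M) :
    ∑ i ∈ range n, f ((i + 1) % n) = ∑ i ∈ range n, f i := by
  cases n with
  | zero => simp
  | succ n =>
    rw [sum_range_succ, sum_range_succ', Nat.mod_self]
    congr 1
    exact sum_congr rfl fun i hi ↦ by rw [Nat.mod_eq_of_lt (by simpa using hi)]

section EdgeVariables

variable {A ι : Type*} [CommRing A] (u : ι → ι → A)

theorem triangle_sq_eq_zero (hsq : ∀ a b, u a b ^ 2 = 0)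
    (harnold : ∀ a b c, u a b * u b c + u b c * u c a + u c a * u a b = 0) (x y z : ι) :
    (u x y + u y z + u z x) ^ 2 = 0 := by
  linear_combination hsq x y + hsq y z + hsq z x + 2 * harnold x y z

theorem sum_cone_eq_sum_polygon (hanti : ∀ a b, u a b = -u b a) (n : ℕ) (a : ℕ → ι) (b : ι) :
    ∑ i ∈ range n, (u (a i) (a ((i + 1) % n)) + u (a ((i + 1) % n)) b + u b (a i)) =
      ∑ i ∈ range n, u (a i) (a ((i + 1) % n)) := by
  have hcancel : ∑ i ∈ range n, u (a ((i + 1) % n)) b + ∑ i ∈ range n, u b (a i) = 0 := by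
    rw [sum_range_mod_add_one n fun i ↦ u (a i) b, ← sum_add_distrib]
    exact sum_eq_zero fun i _ ↦ by rw [hanti b]; ring
  rw [sum_add_distrib, sum_add_distrib, add_assoc, hcancel, add_zero]

theorem sum_polygon_eq_sum_fan (hanti : ∀ a b, u a b = -u b a) (a : ℕ → ι) (k : ℕ) :
    ∑ i ∈ range (k + 1), u (a i) (a (i + 1)) + u (a (k + 1)) (a 0) =
      ∑ i ∈ range k, (u (a 0) (a (i + 1)) + u (a (i + 1)) (a (i + 2)) + u (a (i + 2)) (a 0)) := by
  induction k with
  | zero => simp [hanti (a 1)]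
  | succ k ih =>
    rw [sum_range_succ _ (k + 1)]
    conv_rhs => rw [sum_range_succ, ← ih]
    linear_combination -hanti (a (k + 1)) (a 0)

end EdgeVariables

theorem u1_decoupling_general
    {A ι : Type*} [CommRing A] (u : ι → ι → A)
    (hanti : ∀ a b, u a b = - u b a)
    (hsq : ∀ a b, (u a b) ^ 2 = 0)
    (harnold : ∀ a b c, u a b * u b c + u b c * u c a + u c a * u a b = 0)
    (n : ℕ) (hn : 3 ≤ n) (a : ℕ → ι) (b : ι) :
    (∑ i ∈ Finset.range n,
        (u (a i) (a ((i + 1) % n)) + u (a ((i + 1) % n)) b + u b (a i))) ^ (n - 1) = 0 := by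
  obtain ⟨k, rfl⟩ : ∃ k, n = k + 2 := ⟨n - 2, by omega⟩
  have hpolygon : ∑ i ∈ range (k + 2), u (a i) (a ((i + 1) % (k + 2))) =
      ∑ i ∈ range (k + 1), u (a i) (a (i + 1)) + u (a (k + 1)) (a 0) := by
    rw [sum_range_succ, Nat.mod_self]
    congr 1
    exact sum_congr rfl fun i hi ↦ by rw [Nat.mod_eq_of_lt (by simp at hi; omega)]
  rw [sum_cone_eq_sum_polygon u hanti, hpolygon, sum_polygon_eq_sum_fan u hanti]
  simpa using sum_pow_card_add_one_eq_zero_of_sq_eq_zero (range k) _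
    fun i _ ↦ triangle_sq_eq_zero u hsq harnold (a 0) (a (i + 1)) (a (i + 2))

theorem u1_decoupling
    {A ι : Type*} [CommRing A] [Algebra ℚ A] (u : ι → ι → A)
    (hanti : ∀ a b, u a b = - u b a)
    (hsq : ∀ a b, (u a b) ^ 2 = 0)
    (harnold : ∀ a b c, u a b * u b c + u b c * u c a + u c a * u a b = 0)
    (n : ℕ) (hn : 3 ≤ n) (a : ℕ → ι) (b : ι) :
    (∑ i ∈ Finset.range n,
        (u (a i) (a ((i + 1) % n)) + u (a ((i + 1) % n)) b + u b (a i))) ^ (n - 1) = 0 :=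
  u1_decoupling_general u hanti hsq harnold n hn a b
end

section
/- Let A be a commutative ℚ-algebra and let d, e₁, …, eₙ ∈ A satisfy eᵢ² = 0, e₁ + ⋯ + eₙ = -d, and d^{n-1} = 0. Set dᵢ := d + eᵢ. Then for every 0 ≤ j ≤ n-2 one has d₁^j + d₂^j + ⋯ + dₙ^j = (n - j) · d^j. -/
open Polynomial in
theorem add_pow_of_sq_eq_zero {R : Type*} [CommSemiring R] (x y : R) (hy : y ^ 2 = 0) (j : ℕ) :
    (x + y) ^ j = x ^ j + j * x ^ (j - 1) * y := by
  simpa [derivative_X_pow] using eval_add_of_sq_eq_zero (X ^ j) x y hy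

theorem sum_add_pow_of_sq_eq_zero {ι R : Type*} [Fintype ι] [CommSemiring R] (x : R) (y : ι → R)
    (hy : ∀ i, y i ^ 2 = 0) (j : ℕ) :
    ∑ i, (x + y i) ^ j = Fintype.card ι * x ^ j + j * x ^ (j - 1) * ∑ i, y i := by
  simp only [add_pow_of_sq_eq_zero x _ (hy _), Finset.sum_add_distrib, Finset.sum_const,
    Finset.card_univ, nsmul_eq_mul, Finset.mul_sum]

theorem generalized_u1_decoupling_general
    {A : Type*} [CommRing A] (n : ℕ) (d : A) (e : Fin n → A)
    (hsq : ∀ i, (e i) ^ 2 = 0)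
    (hsum : (∑ i, e i) = -d) :
    ∀ j, j ≤ n - 2 → (∑ i, (d + e i) ^ j) = ((n - j : ℕ) : A) * d ^ j := by
  intro j hj
  rw [sum_add_pow_of_sq_eq_zero d e hsq, hsum, Fintype.card_fin, Nat.cast_sub (by omega)]
  cases j with
  | zero => simp
  | succ k => simp only [Nat.add_sub_cancel]; push_cast; ring

theorem generalized_u1_decoupling
    {A : Type*} [CommRing A] [Algebra ℚ A] (n : ℕ) (d : A) (e : Fin n → A)
    (hsq : ∀ i, (e i) ^ 2 = 0)
    (hsum : (∑ i, e i) = -d)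
    (hd : d ^ (n - 1) = 0) :
    ∀ j, j ≤ n - 2 → (∑ i, (d + e i) ^ j) = ((n - j : ℕ) : A) * d ^ j :=
  generalized_u1_decoupling_general n d e hsq hsum
end

section
/- Let M be an m × (m+2) matrix over a field K whose two-dimensional (right) kernel is spanned by vectors v, w ∈ K^{m+2}. For indices a ≠ b, let M^{(ab)} be the m × m matrix obtained by deleting columns a and b, and suppose p_{ab} := v_a w_b − v_b w_a ≠ 0. Then the ratio det M^{(ab)} / p_{ab} is (up to a consistent sign (−1)^{a+b}) independent of the choice of the pair (a,b): for any two pairs (a,b) and (c,d) with p_{ab}, p_{cd} ≠ 0, (−1)^{a+b} det M^{(ab)} / p_{ab} = (−1)^{c+d} det M^{(cd)} / p_{cd}. -/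
/-- Delete columns `a` and `b` (with `a < b`) from an `m × (m+2)` matrix. -/
def deleteTwoColumns {m : ℕ} {K : Type*} (M : Matrix (Fin m) (Fin (m + 2)) K)
    (a b : Fin (m + 2)) (hab : (a : ℕ) < (b : ℕ)) : Matrix (Fin m) (Fin m) K :=
  M.submatrix id fun i =>
    b.succAbove ((⟨(a : ℕ), hab.trans_le (Nat.lt_succ_iff.mp b.isLt)⟩ : Fin (m + 1)).succAbove i)

/-!
Putting two rows `y, x` on top of `M` gives an alternating bilinear form
`D x y = det (y; x; M)` on `K^(m+2)`, and double cofactor expansion gives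
`D e_a e_b = (-1)^(a+b) det M^(ab)`. If `z` is orthogonal to `v` and `w`, the matrix `(y; z; M)`
sends the plane `span {v, w}` into a line, so it kills a nonzero vector and `D z = 0`.
Hence `D` factors through `z ↦ (v ⬝ z, w ⬝ z) ∈ K²`, where every alternating form is a multiple
of the determinant: `D = λ (v ∧ w)`, and `D e_a e_b = λ p_ab` for every pair.
-/

namespace LinearMap

variable {K V : Type*} [Field K] [AddCommGroup V] [Module K V]

def wedge (φ ψ : V →ₗ[K] K) (x y : V) : K := φ x * ψ y - φ y * ψ x

theorem IsAlt.wedge_mul_apply_eq_wedge_mul_apply {B : LinearMap.BilinForm K V}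
    (hB : IsAlt B) {φ ψ : V →ₗ[K] K} (hker : ∀ z ∈ ker φ ⊓ ker ψ, B z = 0) {x₀ y₀ : V}
    (hp : wedge φ ψ x₀ y₀ ≠ 0) (x y : V) :
    wedge φ ψ x₀ y₀ * B x y = wedge φ ψ x y * B x₀ y₀ := by
  -- Cramer's rule: modulo `ker φ ⊓ ker ψ`, the vector `x` is a combination of `x₀` and `y₀`.
  have expand (x y : V) : wedge φ ψ x₀ y₀ * B x y =
      wedge φ ψ x y₀ * B x₀ y + wedge φ ψ x₀ x * B y₀ y := by
    have hz : wedge φ ψ x₀ y₀ • x - wedge φ ψ x y₀ • x₀ - wedge φ ψ x₀ x • y₀ ∈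
        ker φ ⊓ ker ψ := by
      simp only [Submodule.mem_inf, mem_ker, map_sub, map_smul, smul_eq_mul, wedge]
      constructor <;> ring
    have := congrArg (· y) (hker _ hz)
    simp only [map_sub, map_smul, sub_apply, smul_apply, smul_eq_mul, zero_apply] at this
    linear_combination this
  have hx₀ : wedge φ ψ x₀ y₀ * B x₀ y = wedge φ ψ x₀ y * B x₀ y₀ := by
    linear_combination -expand y x₀ - wedge φ ψ x₀ y₀ * hB.neg x₀ y -
      wedge φ ψ y y₀ * hB.self_eq_zero x₀ + wedge φ ψ x₀ y * hB.neg x₀ y₀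
  have hy₀ : wedge φ ψ x₀ y₀ * B y₀ y = -(wedge φ ψ y y₀ * B x₀ y₀) := by
    linear_combination -expand y y₀ - wedge φ ψ x₀ y₀ * hB.neg y₀ y -
      wedge φ ψ x₀ y * hB.self_eq_zero y₀
  refine mul_left_cancel₀ hp ?_
  linear_combination (norm := (simp only [wedge]; ring1))
    wedge φ ψ x₀ y₀ * expand x y + wedge φ ψ x y₀ * hx₀ + wedge φ ψ x₀ x * hy₀

end LinearMap

namespace Matrix

variable {R : Type*} [CommRing R]

theorem updateRow_of_vecCons_zero {α : Type*} {m : ℕ} {n : Type*} (x y : n → α)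
    (N : Fin m → n → α) :
    (of (vecCons y N)).updateRow 0 x = of (vecCons x N) := by
  ext i j
  cases i using Fin.cases <;> simp [updateRow_apply, Fin.succ_ne_zero]

theorem det_of_vecCons_add {n : ℕ} (x x' : Fin (n + 1) → R) (N : Fin n → Fin (n + 1) → R) :
    (of (vecCons (x + x') N)).det = (of (vecCons x N)).det + (of (vecCons x' N)).det := by
  rw [← updateRow_of_vecCons_zero (x + x') x N, det_updateRow_add, updateRow_of_vecCons_zero,
    updateRow_of_vecCons_zero]

theorem det_of_vecCons_smul {n : ℕ} (c : R) (x : Fin (n + 1) → R) (N : Fin n → Fin (n + 1) → R) :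
    (of (vecCons (c • x) N)).det = c * (of (vecCons x N)).det := by
  rw [← updateRow_of_vecCons_zero (c • x) x N, det_updateRow_smul, updateRow_of_vecCons_zero]

theorem det_of_vecCons_vecCons_swap {n : ℕ} (x y : Fin (n + 2) → R)
    (N : Fin n → Fin (n + 2) → R) :
    (of (vecCons y (vecCons x N))).det = -(of (vecCons x (vecCons y N))).det := by
  have h : of (vecCons y (vecCons x N)) =
      (of (vecCons x (vecCons y N))).submatrix (Equiv.swap 0 1) id := by
    ext i j
    refine Fin.cases ?_ (Fin.cases ?_ fun i => ?_) i
    · rw [submatrix_apply, Equiv.swap_apply_left]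
      rfl
    · rw [submatrix_apply, Fin.succ_zero_eq_one, Equiv.swap_apply_right]
      rfl
    · rw [submatrix_apply,
        Equiv.swap_apply_of_ne_of_ne (Fin.succ_ne_zero _) (Fin.succ_succ_ne_one i)]
      rfl
  rw [h, det_permute, Equiv.Perm.sign_swap (by simp)]
  simp

theorem det_of_vecCons_single {n : ℕ} (j : Fin (n + 1)) (N : Fin n → Fin (n + 1) → R) :
    (of (vecCons (Pi.single j 1) N)).det =
      (-1) ^ (j : ℕ) * (of fun i k => N i (j.succAbove k)).det := by
  simp [det_succ_row_zero, Pi.single_apply, submatrix]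

theorem det_of_vecCons_single_vecCons_single {m : ℕ} (M : Matrix (Fin m) (Fin (m + 2)) R)
    (a b : Fin (m + 2)) (hab : (a : ℕ) < (b : ℕ)) :
    (of (vecCons (Pi.single b 1) (vecCons (Pi.single a 1) M))).det =
      (-1) ^ ((a : ℕ) + (b : ℕ)) * (deleteTwoColumns M a b hab).det := by
  set a' : Fin (m + 1) := ⟨a, hab.trans_le (Nat.lt_succ_iff.mp b.isLt)⟩
  have ha' : b.succAbove a' = a := Fin.succAbove_of_castSucc_lt _ _ hab
  have hrow : (of fun i k => vecCons (Pi.single a 1) M i (b.succAbove k)) =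
      of (vecCons (Pi.single a' 1) fun i k => M i (b.succAbove k)) := by
    ext i k
    cases i using Fin.cases
    · simp [← ha', Pi.single_apply, Fin.succAbove_right_injective.eq_iff]
    · rfl
  rw [det_of_vecCons_single, hrow, det_of_vecCons_single]
  change (-1) ^ (b : ℕ) * ((-1) ^ (a : ℕ) * (deleteTwoColumns M a b hab).det) = _
  ring

variable {m : ℕ}

/-- `y` goes on top so that `detPrependRows M (e a) (e b) = (-1) ^ (a + b) * det M^(ab)`. -/
def detPrependRows (M : Matrix (Fin m) (Fin (m + 2)) R) :
    LinearMap.BilinForm R (Fin (m + 2) → R) :=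
  LinearMap.mk₂ R (fun x y => (of (vecCons y (vecCons x M))).det)
    (fun x x' y => by
      linear_combination det_of_vecCons_vecCons_swap (x + x') y M -
        det_of_vecCons_vecCons_swap x y M - det_of_vecCons_vecCons_swap x' y M -
        det_of_vecCons_add x x' (vecCons y M))
    (fun c x y => by
      linear_combination det_of_vecCons_vecCons_swap (c • x) y M -
        c * det_of_vecCons_vecCons_swap x y M - det_of_vecCons_smul c x (vecCons y M))
    (fun x y y' => det_of_vecCons_add y y' _)
    (fun c x y => det_of_vecCons_smul c y _)

theorem detPrependRows_apply (M : Matrix (Fin m) (Fin (m + 2)) R) (x y : Fin (m + 2) → R) :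
    detPrependRows M x y = (of (vecCons y (vecCons x M))).det :=
  rfl

theorem isAlt_detPrependRows (M : Matrix (Fin m) (Fin (m + 2)) R) :
    (detPrependRows M).IsAlt := fun x =>
  det_zero_of_row_eq (i := 0) (j := 1) (by simp) rfl

theorem detPrependRows_eq_zero {K : Type*} [Field K] {M : Matrix (Fin m) (Fin (m + 2)) K}
    {v w : Fin (m + 2) → K} (hv : M *ᵥ v = 0) (hw : M *ᵥ w = 0)
    (hind : LinearIndependent K ![v, w]) {z : Fin (m + 2) → K} (hzv : v ⬝ᵥ z = 0)
    (hzw : w ⬝ᵥ z = 0) (y : Fin (m + 2) → K) : detPrependRows M z y = 0 := by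
  rw [detPrependRows_apply, ← exists_mulVec_eq_zero_iff]
  have hA (u : Fin (m + 2) → K) : of (vecCons y (vecCons z M)) *ᵥ u =
      vecCons (y ⬝ᵥ u) (vecCons (z ⬝ᵥ u) (M *ᵥ u)) := by
    ext i
    exact Fin.cases rfl (Fin.cases rfl fun _ => rfl) i
  by_cases hy : y ⬝ᵥ v = 0 ∧ y ⬝ᵥ w = 0
  · refine ⟨v, by simpa using hind.ne_zero 0, ?_⟩
    rw [hA, hv, dotProduct_comm z, hzv, hy.1]; simp
  · refine ⟨(y ⬝ᵥ w) • v - (y ⬝ᵥ v) • w, fun h => hy ?_, ?_⟩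
    · have := LinearIndependent.pair_iff.mp hind (y ⬝ᵥ w) (-(y ⬝ᵥ v)) (by
        rw [neg_smul, ← sub_eq_add_neg, h])
      exact ⟨neg_eq_zero.mp this.2, this.1⟩
    · rw [hA]
      simp [mulVec_sub, mulVec_smul, hv, hw, dotProduct_comm z, hzv, hzw, mul_comm]

end Matrix

open Matrix in
theorem reduced_determinant_well_defined_general
    {m : ℕ} {K : Type*} [Field K]
    (M : Matrix (Fin m) (Fin (m + 2)) K) (v w : Fin (m + 2) → K)
    (hv : M.mulVec v = 0) (hw : M.mulVec w = 0)
    (hind : LinearIndependent K ![v, w])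
    (a b c d : Fin (m + 2)) (hab : (a : ℕ) < (b : ℕ)) (hcd : (c : ℕ) < (d : ℕ))
    (hpab : v a * w b - v b * w a ≠ 0) (hpcd : v c * w d - v d * w c ≠ 0) :
    (-1 : K) ^ ((a : ℕ) + (b : ℕ)) * (deleteTwoColumns M a b hab).det
        / (v a * w b - v b * w a)
      = (-1 : K) ^ ((c : ℕ) + (d : ℕ)) * (deleteTwoColumns M c d hcd).det
        / (v c * w d - v d * w c) := by
  have key := (isAlt_detPrependRows M).wedge_mul_apply_eq_wedge_mul_apply
    (φ := dotProductEquiv K _ v) (ψ := dotProductEquiv K _ w)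
    (fun z hz => LinearMap.ext (detPrependRows_eq_zero hv hw hind hz.1 hz.2))
    (x₀ := Pi.single a 1) (y₀ := Pi.single b 1) (by simpa [LinearMap.wedge] using hpab)
    (Pi.single c 1) (Pi.single d 1)
  simp only [LinearMap.wedge, dotProductEquiv_apply_apply, dotProduct_single, mul_one,
    detPrependRows_apply, det_of_vecCons_single_vecCons_single _ _ _ hab,
    det_of_vecCons_single_vecCons_single _ _ _ hcd] at key
  rw [div_eq_div_iff hpab hpcd]
  linear_combination -key

theorem reduced_determinant_well_defined
    {m : ℕ} {K : Type*} [Field K]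
    (M : Matrix (Fin m) (Fin (m + 2)) K) (v w : Fin (m + 2) → K)
    (hv : M.mulVec v = 0) (hw : M.mulVec w = 0)
    (hind : LinearIndependent K ![v, w])
    (hspan : ∀ z, M.mulVec z = 0 → z ∈ Submodule.span K {v, w})
    (a b c d : Fin (m + 2)) (hab : (a : ℕ) < (b : ℕ)) (hcd : (c : ℕ) < (d : ℕ))
    (hpab : v a * w b - v b * w a ≠ 0) (hpcd : v c * w d - v d * w c ≠ 0) :
    (-1 : K) ^ ((a : ℕ) + (b : ℕ)) * (deleteTwoColumns M a b hab).det
        / (v a * w b - v b * w a)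
      = (-1 : K) ^ ((c : ℕ) + (d : ℕ)) * (deleteTwoColumns M c d hcd).det
        / (v c * w d - v d * w c) :=
  reduced_determinant_well_defined_general M v w hv hw hind a b c d hab hcd hpab hpcd
end

section
/- Let Λ be the exterior algebra over a field K of characteristic 0 generated by elements θ₁,…,θₙ, χ₁,…,χₙ (all pairwise anticommuting), and let x₁,…,xₙ ∈ K be distinct. Define u_{ab} := (θ_a − θ_b)(χ_a − χ_b)/(x_a − x_b) ∈ Λ ⊗ K. Then: (i) u_{ab} = −u_{ba}; (ii) u_{ab}² = 0; (iii) u_{ab}u_{bc} + u_{bc}u_{ca} + u_{ca}u_{ab} = 0 for all distinct a, b, c. -/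
/-!
Write `θ_a - θ_b = ι p` and `χ_a - χ_b = ι s`. Swapping the two middle odd factors turns
`u_ab u_bc` into `-((x_a - x_b)(x_b - x_c))⁻¹ (ι p ι q)(ι s ι t)`. For vectors with
`p + q + r = 0` one has `ι p ι q = ι q ι r = ι r ι p`, so all three terms of the cyclic sum are
multiples of one element, and their coefficients add up to zero because the three differences
`x_a - x_b`, `x_b - x_c`, `x_c - x_a` do.
-/

theorem inv_mul_inv_add_inv_mul_inv_add_inv_mul_inv_eq_zero {K : Type*} [Field K] {d₁ d₂ d₃ : K}
    (h₁ : d₁ ≠ 0) (h₂ : d₂ ≠ 0) (h₃ : d₃ ≠ 0) (hsum : d₁ + d₂ + d₃ = 0) :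
    d₁⁻¹ * d₂⁻¹ + d₂⁻¹ * d₃⁻¹ + d₃⁻¹ * d₁⁻¹ = 0 := by
  field_simp
  linear_combination hsum

namespace ExteriorAlgebra

variable {R M : Type*} [CommRing R] [AddCommGroup M] [Module R M]

theorem ι_mul_ι_eq_neg_ι_mul_ι (v w : M) : ι R v * ι R w = -(ι R w * ι R v) :=
  eq_neg_of_add_eq_zero_left (ι_add_mul_swap v w)

theorem ι_mul_ι_mul_ι_mul_ι (p s q t : M) :
    ι R p * ι R s * (ι R q * ι R t) = -(ι R p * ι R q * (ι R s * ι R t)) := by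
  rw [mul_assoc, ← mul_assoc (ι R s), ι_mul_ι_eq_neg_ι_mul_ι s q]
  noncomm_ring

theorem ι_mul_ι_sq (v w : M) : (ι R v * ι R w) ^ 2 = 0 := by
  rw [sq, ι_mul_ι_mul_ι_mul_ι, ι_sq_zero, zero_mul, neg_zero]

theorem ι_mul_ι_eq_of_add_add_eq_zero {p q r : M} (h : p + q + r = 0) :
    ι R p * ι R q = ι R q * ι R r := by
  rw [eq_neg_of_add_eq_zero_right h, map_neg, map_add, mul_neg, mul_add, ι_sq_zero, add_zero,
    ι_mul_ι_eq_neg_ι_mul_ι p q]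

theorem cyclic_sum_smul_ι_mul_ι_eq_zero {p q r s t w : M} (hpqr : p + q + r = 0)
    (hstw : s + t + w = 0) {α β γ : R} (hαβγ : α * β + β * γ + γ * α = 0) :
    α • (ι R p * ι R s) * (β • (ι R q * ι R t)) + β • (ι R q * ι R t) * (γ • (ι R r * ι R w)) +
      γ • (ι R r * ι R w) * (α • (ι R p * ι R s)) = 0 := by
  have hqrp : q + r + p = 0 := by rw [← hpqr]; abel
  have htws : t + w + s = 0 := by rw [← hstw]; abel
  have hqr : ι R q * ι R r = ι R p * ι R q := (ι_mul_ι_eq_of_add_add_eq_zero hpqr).symm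
  have hrp : ι R r * ι R p = ι R p * ι R q := by rw [← ι_mul_ι_eq_of_add_add_eq_zero hqrp, hqr]
  have htw : ι R t * ι R w = ι R s * ι R t := (ι_mul_ι_eq_of_add_add_eq_zero hstw).symm
  have hws : ι R w * ι R s = ι R s * ι R t := by rw [← ι_mul_ι_eq_of_add_add_eq_zero htws, htw]
  simp only [smul_mul_smul_comm]
  rw [ι_mul_ι_mul_ι_mul_ι p s q t, ι_mul_ι_mul_ι_mul_ι q t r w, ι_mul_ι_mul_ι_mul_ι r w p s,
    hqr, hrp, htw, hws, ← add_smul, ← add_smul, hαβγ, zero_smul]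

end ExteriorAlgebra

open ExteriorAlgebra

theorem grassmann_realization_relations_general
    {K : Type*} [Field K] (n : ℕ) (x : Fin n → K)
    (hx : Function.Injective x) :
    let θ : Fin n → ExteriorAlgebra K ((Fin n ⊕ Fin n) → K) :=
      fun i => ExteriorAlgebra.ι K (Pi.single (Sum.inl i) (1 : K))
    let χ : Fin n → ExteriorAlgebra K ((Fin n ⊕ Fin n) → K) :=
      fun i => ExteriorAlgebra.ι K (Pi.single (Sum.inr i) (1 : K))
    let u : Fin n → Fin n → ExteriorAlgebra K ((Fin n ⊕ Fin n) → K) :=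
      fun a b => (x a - x b)⁻¹ • ((θ a - θ b) * (χ a - χ b))
    (∀ a b, u a b = - u b a) ∧
    (∀ a b, (u a b) ^ 2 = 0) ∧
    (∀ a b c, a ≠ b → b ≠ c → c ≠ a →
      u a b * u b c + u b c * u c a + u c a * u a b = 0) := by
  intro θ χ u
  let e : Fin n ⊕ Fin n → (Fin n ⊕ Fin n) → K := fun j => Pi.single j 1
  have hu : ∀ a b, u a b = (x a - x b)⁻¹ •
      (ι K (e (.inl a) - e (.inl b)) * ι K (e (.inr a) - e (.inr b))) := by
    intro a b
    simp only [u, θ, χ, e, map_sub]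
  have hx_sub : ∀ {a b}, a ≠ b → x a - x b ≠ 0 := fun hab => sub_ne_zero.2 (hx.ne hab)
  refine ⟨fun a b => ?_, fun a b => ?_, fun a b c hab hbc hca => ?_⟩
  · simp only [u]
    rw [← neg_sub (θ a), ← neg_sub (χ a), ← neg_sub (x a), inv_neg, neg_mul_neg, neg_smul, neg_neg]
  · rw [hu, smul_pow, ι_mul_ι_sq, smul_zero]
  · simp only [hu]
    exact cyclic_sum_smul_ι_mul_ι_eq_zero (by abel) (by abel) <|
      inv_mul_inv_add_inv_mul_inv_add_inv_mul_inv_eq_zero (hx_sub hab) (hx_sub hbc)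
        (hx_sub hca) (by ring)

theorem grassmann_realization_relations
    {K : Type*} [Field K] [CharZero K] (n : ℕ) (x : Fin n → K)
    (hx : Function.Injective x) :
    let θ : Fin n → ExteriorAlgebra K ((Fin n ⊕ Fin n) → K) :=
      fun i => ExteriorAlgebra.ι K (Pi.single (Sum.inl i) (1 : K))
    let χ : Fin n → ExteriorAlgebra K ((Fin n ⊕ Fin n) → K) :=
      fun i => ExteriorAlgebra.ι K (Pi.single (Sum.inr i) (1 : K))
    let u : Fin n → Fin n → ExteriorAlgebra K ((Fin n ⊕ Fin n) → K) :=
      fun a b => (x a - x b)⁻¹ • ((θ a - θ b) * (χ a - χ b))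
    (∀ a b, u a b = - u b a) ∧
    (∀ a b, (u a b) ^ 2 = 0) ∧
    (∀ a b c, a ≠ b → b ≠ c → c ≠ a →
      u a b * u b c + u b c * u c a + u c a * u a b = 0) :=
  grassmann_realization_relations_general n x hx
end

section
/- Let Λ be the exterior algebra over a field K of characteristic 0 generated by θ₁,…,θₙ, χ₁,…,χₙ, and x₁,…,xₙ ∈ K distinct. Define Δ_{abc} := −(θ_a x_{bc} + θ_b x_{ca} + θ_c x_{ab})(χ_a x_{bc} + χ_b x_{ca} + χ_c x_{ab}) / (x_{ab} x_{bc} x_{ca}) with x_{ab} := x_a − x_b. Then Δ_{abc} = u_{ab} + u_{bc} + u_{ca}, where u_{ab} := (θ_a − θ_b)(χ_a − χ_b)/x_{ab}. -/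
/-- Comparing coefficients of `tᵢ * sⱼ`, the off-diagonal ones agree identically
(e.g. `-B C / (A B C) = -A⁻¹`), while the diagonal ones need `A + B + C = 0`
(e.g. `-B² / (A B C) = A⁻¹ + C⁻¹`). -/
theorem smul_triangle_mul_eq {K R : Type*} [Field K] [Ring R] [Algebra K R] {A B C : K}
    (hA : A ≠ 0) (hB : B ≠ 0) (hC : C ≠ 0) (hABC : A + B + C = 0) (t₁ t₂ t₃ s₁ s₂ s₃ : R) :
    (-(A * B * C)⁻¹) • ((B • t₁ + C • t₂ + A • t₃) * (B • s₁ + C • s₂ + A • s₃))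
      = A⁻¹ • ((t₁ - t₂) * (s₁ - s₂)) + B⁻¹ • ((t₂ - t₃) * (s₂ - s₃))
        + C⁻¹ • ((t₃ - t₁) * (s₃ - s₁)) := by
  simp only [mul_add, add_mul, sub_mul, mul_sub, smul_mul_assoc, mul_smul_comm, smul_smul,
    smul_add, smul_sub]
  match_scalars <;> field_simp <;> first | ring1 | linear_combination -hABC

theorem grassmann_triangle_decomposition_general
    {K : Type*} [Field K] (n : ℕ) (x : Fin n → K)
    (hx : Function.Injective x) (a b c : Fin n)
    (hab : a ≠ b) (hbc : b ≠ c) (hca : c ≠ a) :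
    let θ : Fin n → ExteriorAlgebra K ((Fin n ⊕ Fin n) → K) :=
      fun i => ExteriorAlgebra.ι K (Pi.single (Sum.inl i) (1 : K))
    let χ : Fin n → ExteriorAlgebra K ((Fin n ⊕ Fin n) → K) :=
      fun i => ExteriorAlgebra.ι K (Pi.single (Sum.inr i) (1 : K))
    let u : Fin n → Fin n → ExteriorAlgebra K ((Fin n ⊕ Fin n) → K) :=
      fun p q => (x p - x q)⁻¹ • ((θ p - θ q) * (χ p - χ q))
    (-(((x a - x b) * (x b - x c) * (x c - x a))⁻¹)) •
        (((x b - x c) • θ a + (x c - x a) • θ b + (x a - x b) • θ c) *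
          ((x b - x c) • χ a + (x c - x a) • χ b + (x a - x b) • χ c))
      = u a b + u b c + u c a := by
  intro θ χ u
  have hsub {p q : Fin n} (h : p ≠ q) : x p - x q ≠ 0 := sub_ne_zero.mpr (hx.ne h)
  exact smul_triangle_mul_eq (hsub hab) (hsub hbc) (hsub hca) (by ring) _ _ _ _ _ _

theorem grassmann_triangle_decomposition
    {K : Type*} [Field K] [CharZero K] (n : ℕ) (x : Fin n → K)
    (hx : Function.Injective x) (a b c : Fin n)
    (hab : a ≠ b) (hbc : b ≠ c) (hca : c ≠ a) :
    let θ : Fin n → ExteriorAlgebra K ((Fin n ⊕ Fin n) → K) :=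
      fun i => ExteriorAlgebra.ι K (Pi.single (Sum.inl i) (1 : K))
    let χ : Fin n → ExteriorAlgebra K ((Fin n ⊕ Fin n) → K) :=
      fun i => ExteriorAlgebra.ι K (Pi.single (Sum.inr i) (1 : K))
    let u : Fin n → Fin n → ExteriorAlgebra K ((Fin n ⊕ Fin n) → K) :=
      fun p q => (x p - x q)⁻¹ • ((θ p - θ q) * (χ p - χ q))
    (-(((x a - x b) * (x b - x c) * (x c - x a))⁻¹)) •
        (((x b - x c) • θ a + (x c - x a) • θ b + (x a - x b) • θ c) *
          ((x b - x c) • χ a + (x c - x a) • χ b + (x a - x b) • χ c))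
      = u a b + u b c + u c a :=
  grassmann_triangle_decomposition_general n x hx a b c hab hbc hca
end

section
/- Let A be a commutative ℚ-algebra and let Δ₁, …, Δₙ₋₂, Δ'₁, …, Δ'ₘ ∈ A be square-zero elements such that Δ₁ + ⋯ + Δₙ₋₂ = Δ'₁ + ⋯ + Δ'ₘ with m ≤ n − 3. Then Δ₁ Δ₂ ⋯ Δₙ₋₂ = 0. -/
/-!
For square-zero elements `x₁, …, x_k` the multinomial expansion of `(x₁ + ⋯ + x_k) ^ p` keeps only
the squarefree monomials, so `(∑ xᵢ) ^ p = p! • eₚ(x)`. With `p = n - 2` the left-hand sum gives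
`(n - 2)! • ∏ Δᵢ`, while the right-hand sum has fewer than `n - 2` terms, so `eₙ₋₂(Δ') = 0`.
Dividing by `(n - 2)!` in the `ℚ`-algebra gives the claim.
-/

open Nat

theorem add_pow_succ_of_sq_eq_zero {R : Type*} [CommSemiring R] {a : R} (ha : a ^ 2 = 0)
    (b : R) (k : ℕ) : (a + b) ^ (k + 1) = b ^ (k + 1) + (k + 1) • (a * b ^ k) := by
  induction k with
  | zero => simp [add_comm]
  | succ k ih =>
    calc (a + b) ^ (k + 1 + 1)
        = b ^ (k + 1 + 1) + (k + 1 + 1) • (a * b ^ (k + 1)) + (k + 1) • (a ^ 2 * b ^ k) := by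
          rw [pow_succ, ih]; simp only [nsmul_eq_mul]; push_cast; ring
      _ = b ^ (k + 1 + 1) + (k + 1 + 1) • (a * b ^ (k + 1)) := by simp [ha]

namespace Multiset

variable {R : Type*} [CommSemiring R]

theorem esymm_cons_succ (a : R) (s : Multiset R) (k : ℕ) :
    (a ::ₘ s).esymm (k + 1) = s.esymm (k + 1) + a * s.esymm k := by
  simp only [esymm, powersetCard_cons, map_add, sum_add, map_map, Function.comp_def, prod_cons,
    sum_map_mul_left]

theorem esymm_card (s : Multiset R) : s.esymm (card s) = s.prod := by
  simp [esymm, powersetCard_self]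

theorem esymm_eq_zero_of_card_lt {s : Multiset R} {k : ℕ} (h : card s < k) : s.esymm k = 0 := by
  simp [esymm, powersetCard_eq_empty k h]

theorem sum_pow_eq_factorial_smul_esymm_of_sq_eq_zero {s : Multiset R} (hs : ∀ x ∈ s, x ^ 2 = 0)
    (k : ℕ) : s.sum ^ k = k ! • s.esymm k := by
  induction s using Multiset.induction_on generalizing k with
  | empty => cases k <;> simp [esymm, powersetCard_zero_left, powersetCard_zero_right]
  | cons a s ih =>
    have ha : a ^ 2 = 0 := hs a (mem_cons_self a s)
    have ih := ih fun x hx ↦ hs x (mem_cons_of_mem hx)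
    cases k with
    | zero => simp [esymm, powersetCard_zero_left]
    | succ k =>
      rw [sum_cons, add_pow_succ_of_sq_eq_zero ha, ih, ih, esymm_cons_succ, factorial_succ,
        smul_add, mul_smul_comm, smul_smul]

end Multiset

theorem vanishing_criterion
    {A : Type*} [CommRing A] [Algebra ℚ A] (n m : ℕ) (hn : 3 ≤ n)
    (hm : m ≤ n - 3)
    (Δ : Fin (n - 2) → A) (Δ' : Fin m → A)
    (hΔ : ∀ i, (Δ i) ^ 2 = 0) (hΔ' : ∀ j, (Δ' j) ^ 2 = 0)
    (hsum : (∑ i, Δ i) = ∑ j, Δ' j) :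
    (∏ i, Δ i) = 0 := by
  have pow_eq {k : ℕ} (x : Fin k → A) (hx : ∀ i, x i ^ 2 = 0) :
      (∑ i, x i) ^ (n - 2) = (n - 2)! • (Finset.univ.val.map x).esymm (n - 2) :=
    Multiset.sum_pow_eq_factorial_smul_esymm_of_sq_eq_zero (by simpa using hx) _
  have lhs : (∑ i, Δ i) ^ (n - 2) = (n - 2)! • ∏ i, Δ i := by
    have hcard : Multiset.card (Finset.univ.val.map Δ) = n - 2 := by simp
    rw [pow_eq Δ hΔ, ← congrArg (Multiset.esymm _) hcard, Multiset.esymm_card]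
    rfl
  have rhs : (∑ j, Δ' j) ^ (n - 2) = 0 := by
    have hcard : Multiset.card (Finset.univ.val.map Δ') < n - 2 := by
      simp only [Fin.univ_val_map, Multiset.coe_card, List.length_ofFn]; omega
    rw [pow_eq Δ' hΔ', Multiset.esymm_eq_zero_of_card_lt hcard, smul_zero]
  have hfact : ((n - 2)! : ℚ) • ∏ i, Δ i = 0 := by
    rw [Nat.cast_smul_eq_nsmul, ← lhs, hsum, rhs]
  exact (smul_eq_zero.mp hfact).resolve_left (by exact_mod_cast (n - 2).factorial_ne_zero)
end

section
/- Let A be a commutative ℚ-algebra and u : ι → ι → A satisfy antisymmetry, square-zero, and the Arnold relation; set Δ a b c := u a b + u b c + u c a. Then for six indices 1,…,6: Δ 1 2 3 · Δ 3 4 5 · Δ 5 6 1 · Δ 6 4 2 = Δ 2 3 4 · Δ 3 4 5 · Δ 5 6 1 · Δ 6 4 2 + Δ 1 2 3 · Δ 2 3 4 · Δ 5 6 1 · Δ 6 4 2 + Δ 1 2 3 · Δ 3 4 5 · Δ 2 3 4 · Δ 6 4 2 + Δ 1 2 3 · Δ 3 4 5 · Δ 5 6 1 · Δ 2 3 4.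 -/
/-!
Each `Δ a b c` squares to zero by the Arnold relation. The octahedral relation
`Δ₁₂₃ + Δ₃₄₅ + Δ₅₆₁ + Δ₆₄₂ - Δ₂₃₄ = Δ₄₅₆ + Δ₆₁₂ + Δ₁₅₃` is a formal identity in the `u`'s.
For square-zero commuting elements only the squarefree monomials survive in a fourth power,
so the fourth power of the left side is `24` times the difference of the two sides of the
theorem, while the fourth power of the right side, a sum of three square-zero elements, vanishes.
-/

section SquareZero

variable {R : Type*} [CommRing R]

theorem sq_add_add_eq_zero {x y z : R} (hx : x ^ 2 = 0) (hy : y ^ 2 = 0) (hz : z ^ 2 = 0)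
    (h : x * y + y * z + z * x = 0) : (x + y + z) ^ 2 = 0 := by
  linear_combination hx + hy + hz + 2 * h

theorem add_add_pow_four_eq_zero {x y z : R} (hx : x ^ 2 = 0) (hy : y ^ 2 = 0)
    (hz : z ^ 2 = 0) : (x + y + z) ^ 4 = 0 :=
  have hxy : (x + y) ^ 3 = 0 :=
    (Commute.all x y).add_pow_eq_zero_of_add_le_succ_of_pow_eq_zero hx hy le_rfl
  (Commute.all _ z).add_pow_eq_zero_of_add_le_succ_of_pow_eq_zero hxy hz le_rfl

theorem add_pow_four_of_sq_eq_zero {a b c d f : R} (ha : a ^ 2 = 0) (hb : b ^ 2 = 0)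
    (hc : c ^ 2 = 0) (hd : d ^ 2 = 0) (hf : f ^ 2 = 0) :
    (a + b + c + d + f) ^ 4
      = 24 * (a * b * c * d + (a * b * c + a * b * d + a * c * d + b * c * d) * f) := by
  grind

end SquareZero

theorem eq_zero_of_ofNat_mul_eq_zero {A : Type*} [Ring A] [Algebra ℚ A] (n : ℕ) [n.AtLeastTwo]
    {x : A} (h : (OfNat.ofNat n : A) * x = 0) : x = 0 := by
  have := congrArg (algebraMap ℚ A (OfNat.ofNat n)⁻¹ * ·) h
  simpa [← mul_assoc, ← map_ofNat (algebraMap ℚ A), ← map_mul] using this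

theorem octahedral_decomposition_identity_general
    {A ι : Type*} [CommRing A] [Algebra ℚ A] (u : ι → ι → A)
    (hsq : ∀ a b, (u a b) ^ 2 = 0)
    (harnold : ∀ a b c, u a b * u b c + u b c * u c a + u c a * u a b = 0)
    (i₁ i₂ i₃ i₄ i₅ i₆ : ι) :
    letI Δ : ι → ι → ι → A := fun a b c => u a b + u b c + u c a
    Δ i₁ i₂ i₃ * Δ i₃ i₄ i₅ * Δ i₅ i₆ i₁ * Δ i₆ i₄ i₂
      = Δ i₂ i₃ i₄ * Δ i₃ i₄ i₅ * Δ i₅ i₆ i₁ * Δ i₆ i₄ i₂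
        + Δ i₁ i₂ i₃ * Δ i₂ i₃ i₄ * Δ i₅ i₆ i₁ * Δ i₆ i₄ i₂
        + Δ i₁ i₂ i₃ * Δ i₃ i₄ i₅ * Δ i₂ i₃ i₄ * Δ i₆ i₄ i₂
        + Δ i₁ i₂ i₃ * Δ i₃ i₄ i₅ * Δ i₅ i₆ i₁ * Δ i₂ i₃ i₄ := by
  set Δ : ι → ι → ι → A := fun a b c => u a b + u b c + u c a
  have hΔ (a b c : ι) : Δ a b c ^ 2 = 0 :=
    sq_add_add_eq_zero (hsq a b) (hsq b c) (hsq c a) (harnold a b c)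
  have hoct : Δ i₁ i₂ i₃ + Δ i₃ i₄ i₅ + Δ i₅ i₆ i₁ + Δ i₆ i₄ i₂ + -Δ i₂ i₃ i₄
      = Δ i₄ i₅ i₆ + Δ i₆ i₁ i₂ + Δ i₁ i₅ i₃ := by
    simp only [Δ]; ring
  have h24 := add_pow_four_of_sq_eq_zero (hΔ i₁ i₂ i₃) (hΔ i₃ i₄ i₅) (hΔ i₅ i₆ i₁)
    (hΔ i₆ i₄ i₂) (by rw [neg_sq]; exact hΔ i₂ i₃ i₄)
  rw [hoct, add_add_pow_four_eq_zero (hΔ _ _ _) (hΔ _ _ _) (hΔ _ _ _)] at h24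
  rw [← sub_eq_zero]
  refine eq_zero_of_ofNat_mul_eq_zero 24 ?_
  linear_combination -h24

theorem octahedral_decomposition_identity
    {A ι : Type*} [CommRing A] [Algebra ℚ A] (u : ι → ι → A)
    (hanti : ∀ a b, u a b = - u b a)
    (hsq : ∀ a b, (u a b) ^ 2 = 0)
    (harnold : ∀ a b c, u a b * u b c + u b c * u c a + u c a * u a b = 0)
    (i₁ i₂ i₃ i₄ i₅ i₆ : ι) :
    letI Δ : ι → ι → ι → A := fun a b c => u a b + u b c + u c a
    Δ i₁ i₂ i₃ * Δ i₃ i₄ i₅ * Δ i₅ i₆ i₁ * Δ i₆ i₄ i₂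
      = Δ i₂ i₃ i₄ * Δ i₃ i₄ i₅ * Δ i₅ i₆ i₁ * Δ i₆ i₄ i₂
        + Δ i₁ i₂ i₃ * Δ i₂ i₃ i₄ * Δ i₅ i₆ i₁ * Δ i₆ i₄ i₂
        + Δ i₁ i₂ i₃ * Δ i₃ i₄ i₅ * Δ i₂ i₃ i₄ * Δ i₆ i₄ i₂
        + Δ i₁ i₂ i₃ * Δ i₃ i₄ i₅ * Δ i₅ i₆ i₁ * Δ i₂ i₃ i₄ :=
  octahedral_decomposition_identity_general u hsq harnold i₁ i₂ i₃ i₄ i₅ i₆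
end

section
/- Let A be a commutative ring, u antisymmetric with values in A, and Δ a b c := u a b + u b c + u c a. For even n = 2m ≥ 4, the bipyramid linear identity holds: Σ_{i=1}^{m} Δ(2i−1, 2i, n−1) + Σ_{i=1}^{m} Δ(2i+1, 2i, n) = Σ_{i=1}^{m} Δ(2i+1, 2i, n−1) + Σ_{i=1}^{m} Δ(2i−1, 2i, n), where indices in the first two arguments are taken modulo n−2 in the range 1,…,n−2. -/
/-!
Expanding every `Δ`, the terms `u (lab (2i+2)) p` and `u (lab (2i+2)) q` occur once on each side
and cancel. What is left is, for `r ∈ {p, q}`, the difference between `∑ u r (lab (2i+1))` and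
`∑ u r (lab (2i+3))`, which vanishes because `i ↦ 2i + 3` is `i ↦ 2i + 1` shifted by one step
and the odd labels are indexed cyclically: `2 (m - 1) = 0` in `ZMod (2m - 2)`.
-/

open Finset

theorem Finset.sum_range_succ_eq_of_apply_eq {M : Type*} [AddCancelCommMonoid M]
    (f : ℕ → M) {k : ℕ} (hk : f k = f 0) :
    ∑ i ∈ range k, f (i + 1) = ∑ i ∈ range k, f i := by
  apply add_right_cancel (b := f 0)
  rw [← sum_range_succ', sum_range_succ, hk]

theorem ZMod.sum_range_two_mul_add_three {M : Type*} [AddCancelCommMonoid M] {n k : ℕ}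
    (hk : 2 * k = n) (g : ZMod n → M) :
    ∑ i ∈ range k, g (2 * i + 3) = ∑ i ∈ range k, g (2 * i + 1) := by
  have hwrap : g (2 * (k : ZMod n) + 1) = g (2 * ((0 : ℕ) : ZMod n) + 1) := by
    rw [← Nat.cast_ofNat, ← Nat.cast_mul, hk, ZMod.natCast_self]
    simp
  have hshift := sum_range_succ_eq_of_apply_eq (fun i : ℕ => g (2 * (i : ZMod n) + 1)) hwrap
  simp only [Nat.cast_add, Nat.cast_one] at hshift
  rw [← hshift]
  congr! 2
  ring

theorem bipyramid_linear_identity_general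
    {A ι : Type*} [CommRing A] (m : ℕ)
    (u : ι → ι → A)
    (lab : ZMod (2 * m - 2) → ι) (p q : ι) :
    letI Δ : ι → ι → ι → A := fun a b c => u a b + u b c + u c a
    (∑ i ∈ Finset.range (m - 1), Δ (lab (2 * i + 1)) (lab (2 * i + 2)) p)
      + (∑ i ∈ Finset.range (m - 1), Δ (lab (2 * i + 3)) (lab (2 * i + 2)) q)
    = (∑ i ∈ Finset.range (m - 1), Δ (lab (2 * i + 3)) (lab (2 * i + 2)) p)
      + (∑ i ∈ Finset.range (m - 1), Δ (lab (2 * i + 1)) (lab (2 * i + 2)) q) := by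
  have hshift (r : ι) := ZMod.sum_range_two_mul_add_three (by omega : 2 * (m - 1) = 2 * m - 2)
    (fun x => u r (lab x))
  simp only [sum_add_distrib]
  linear_combination hshift q - hshift p

theorem bipyramid_linear_identity
    {A ι : Type*} [CommRing A] (m : ℕ) (hm : 2 ≤ m)
    (u : ι → ι → A) (hanti : ∀ a b, u a b = - u b a)
    (lab : ZMod (2 * m - 2) → ι) (p q : ι) :
    letI Δ : ι → ι → ι → A := fun a b c => u a b + u b c + u c a
    (∑ i ∈ Finset.range (m - 1), Δ (lab (2 * i + 1)) (lab (2 * i + 2)) p)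
      + (∑ i ∈ Finset.range (m - 1), Δ (lab (2 * i + 3)) (lab (2 * i + 2)) q)
    = (∑ i ∈ Finset.range (m - 1), Δ (lab (2 * i + 3)) (lab (2 * i + 2)) p)
      + (∑ i ∈ Finset.range (m - 1), Δ (lab (2 * i + 1)) (lab (2 * i + 2)) q) :=
  bipyramid_linear_identity_general m u lab p q
end
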